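/- The six-vertex digraph M on {a, b, a0, b0, a1, b1} with arrows E = {(a,a),(a,b),(b,a),(b,b),(a0,b0),(b0,a1),(a1,b1),(b1,a0),(a,a0),(a,a1),(b,b0),(b,b1)} is homogeneous but not uniformly homogeneous: there is no group homomorphism from Aut of the induced substructure on {a,b} to Aut(M) assigning to each automorphism of {a,b} an extension of it in Aut(M). -/

import Mathlib

/-- The six vertices of the digraph `M`. -/
inductive V : Type
  | a | b | a0 | b0 | a1 | b1
deriving DecidableEq

instance : Fintype V where
  elems := {V.a, V.b, V.a0, V.b0, V.a1, V.b1}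
  complete := fun x => by cases x <;> simp

open V

/-- The arrow relation of the digraph `M`. -/
def E (x y : V) : Prop :=
  (x, y) ∈ ([(a,a),(a,b),(b,a),(b,b),(a0,b0),(b0,a1),(a1,b1),(b1,a0),
             (a,a0),(a,a1),(b,b0),(b,b1)] : List (V × V))

/-- Automorphisms of the digraph `M`: bijections preserving `E` in both directions. -/
def IsAut (f : Equiv.Perm V) : Prop := ∀ x y : V, E x y ↔ E (f x) (f y)

instance : DecidableRel E := fun x y => by unfold E; infer_instance
instance : DecidablePred IsAut := fun f => by unfold IsAut; infer_instance

/-- fast Bool adjacency -/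
def eB (x y : V) : Bool :=
  match x, y with
  | a, a => true | a, b => true | b, a => true | b, b => true
  | a0, b0 => true | b0, a1 => true | a1, b1 => true | b1, a0 => true
  | a, a0 => true | a, a1 => true | b, b0 => true | b, b1 => true
  | _, _ => false

lemma eB_iff (x y : V) : eB x y = true ↔ E x y := by
  revert x y; decide

def vB (x y : V) : Bool := match x, y with
  | a, a => true | b, b => true | a0, a0 => true | b0, b0 => true
  | a1, a1 => true | b1, b1 => true | _, _ => false

lemma vB_iff (x y : V) : vB x y = true ↔ x = y := by revert x y; decide

def idP : Equiv.Perm V := Equiv.refl V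
def rho : Equiv.Perm V :=
  ⟨fun v => match v with | a=>b | b=>a | a0=>b0 | b0=>a1 | a1=>b1 | b1=>a0,
   fun v => match v with | a=>b | b=>a | b0=>a0 | a1=>b0 | b1=>a1 | a0=>b1,
   by decide, by decide⟩
def rho2 : Equiv.Perm V :=
  ⟨fun v => match v with | a=>a | b=>b | a0=>a1 | b0=>b1 | a1=>a0 | b1=>b0,
   fun v => match v with | a=>a | b=>b | a0=>a1 | b0=>b1 | a1=>a0 | b1=>b0,
   by decide, by decide⟩
def rho3 : Equiv.Perm V :=
  ⟨fun v => match v with | a=>b | b=>a | a0=>b1 | b0=>a0 | a1=>b0 | b1=>a1,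
   fun v => match v with | a=>b | b=>a | b1=>a0 | a0=>b0 | b0=>a1 | a1=>b1,
   by decide, by decide⟩
def auts4 : List (Equiv.Perm V) := [idP, rho, rho2, rho3]

set_option maxRecDepth 10000 in
lemma auts4_aut : ∀ p ∈ auts4, IsAut p := by decide

def vs : List V := [a,b,a0,b0,a1,b1]
lemma mem_vs (x : V) : x ∈ vs := by cases x <;> decide

def Good (g : V → Option V) : Prop :=
  ∀ x y u v, g x = some u → g y = some v → ((u = v → x = y) ∧ (E x y ↔ E u v))

def checkB (g : V → Option V) : Bool :=
  vs.all fun x => vs.all fun y =>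
    match g x, g y with
    | some u, some v => (!(vB u v) || vB x y) && (eB x y == eB u v)
    | _, _ => true

lemma check_iff (g : V → Option V) : checkB g = true ↔ Good g := by
  unfold checkB Good
  rw [List.all_eq_true]
  constructor
  · intro H x y u v hx hy
    have := H x (mem_vs x)
    rw [List.all_eq_true] at this
    have := this y (mem_vs y)
    rw [hx, hy, Bool.and_eq_true, Bool.or_eq_true, Bool.not_eq_true'] at this
    obtain ⟨h1, h2⟩ := this
    constructor
    · intro huv
      rcases h1 with h1 | h1
      · rw [← vB_iff u v] at huv; rw [huv] at h1; cases h1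
      · exact (vB_iff x y).mp h1
    · rw [← eB_iff, ← eB_iff]
      cases hxy : eB x y <;> cases huv : eB u v <;>
        simp_all
  · intro H x _
    rw [List.all_eq_true]
    intro y _
    cases hx : g x with
    | none => rfl
    | some u =>
      cases hy : g y with
      | none => rfl
      | some v =>
        obtain ⟨h1, h2⟩ := H x y u v hx hy
        rw [Bool.and_eq_true, Bool.or_eq_true, Bool.not_eq_true']
        constructor
        · cases hvb : vB u v
          · exact Or.inl rfl
          · exact Or.inr ((vB_iff x y).mpr (h1 ((vB_iff u v).mp hvb)))
        · rw [← eB_iff, ← eB_iff] at h2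
          cases hxy : eB x y <;> cases huv : eB u v <;> simp_all
    
def Extends (p : Equiv.Perm V) (g : V → Option V) : Prop := ∀ x u, g x = some u → p x = u

def extendsB (p : Equiv.Perm V) (g : V → Option V) : Bool :=
  vs.all fun x => match g x with
    | some u => vB (p x) u
    | none => true

lemma extends_iff (p : Equiv.Perm V) (g : V → Option V) : extendsB p g = true ↔ Extends p g := by
  unfold extendsB Extends
  rw [List.all_eq_true]
  constructor
  · intro H x u hx
    have := H x (mem_vs x)
    rw [hx] at this
    exact (vB_iff _ _).mp this
  · intro H x _
    cases hx : g x with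
    | none => rfl
    | some u => exact (vB_iff _ _).mpr (H x u hx)

instance (p : Equiv.Perm V) : DecidablePred (Extends p) := fun g => decidable_of_iff _ (extends_iff p g)
instance : DecidablePred Good := fun g => decidable_of_iff _ (check_iff g)
instance (g : V → Option V) : Decidable (∃ p ∈ auts4, Extends p g) :=
  List.decidableBEx (fun p => Extends p g) auts4

def mk (ga gb ga0 gb0 ga1 gb1 : Option V) : V → Option V :=
  fun v => match v with
  | a => ga | b => gb | a0 => ga0 | b0 => gb0 | a1 => ga1 | b1 => gb1

inductive AB : Type
  | xa | xb
deriving DecidableEq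

instance : Fintype AB := ⟨⟨↑([AB.xa, AB.xb] : List AB), by decide⟩, fun x => by cases x <;> decide⟩

inductive CY : Type
  | xa0 | xb0 | xa1 | xb1
deriving DecidableEq

instance : Fintype CY := ⟨⟨↑([CY.xa0, CY.xb0, CY.xa1, CY.xb1] : List CY), by decide⟩, fun x => by cases x <;> decide⟩

def embAB : AB → V := fun v => match v with | .xa => a | .xb => b
def embCY : CY → V := fun v => match v with | .xa0 => a0 | .xb0 => b0 | .xa1 => a1 | .xb1 => b1
def encAB : V → Option AB := fun v => match v with | a => some .xa | b => some .xb | _ => none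
def encCY : V → Option CY :=
  fun v => match v with | a0 => some .xa0 | b0 => some .xb0 | a1 => some .xa1 | b1 => some .xb1 | _ => none

set_option maxRecDepth 100000 in
set_option maxHeartbeats 16000000 in
lemma core5 : ∀ (ga gb : Option AB) (g0 g1 g2 g3 : Option CY),
    Good (mk (ga.map embAB) (gb.map embAB) (g0.map embCY) (g1.map embCY)
      (g2.map embCY) (g3.map embCY)) →
    ∃ p ∈ auts4, Extends p (mk (ga.map embAB) (gb.map embAB) (g0.map embCY) (g1.map embCY)
      (g2.map embCY) (g3.map embCY)) := by decide

lemma core : ∀ g : V → Option V, Good g → ∃ p ∈ auts4, Extends p g := by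
  intro g hg
  have hAB : ∀ x u, x = a ∨ x = b → g x = some u → u = a ∨ u = b := by
    intro x u hx hu
    have hE : E u u := ((hg x x u u hu hu).2).mp (by rcases hx with rfl | rfl <;> decide)
    revert hE
    cases u <;> intro hE <;>
      first
        | exact Or.inl rfl
        | exact Or.inr rfl
        | exact absurd hE (by decide)
  have hCY : ∀ x u, x = a0 ∨ x = b0 ∨ x = a1 ∨ x = b1 → g x = some u →
      u = a0 ∨ u = b0 ∨ u = a1 ∨ u = b1 := by
    intro x u hx hu
    have hE : ¬ E u u := fun h => (by
      have : E x x := ((hg x x u u hu hu).2).mpr h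
      revert this
      rcases hx with rfl | rfl | rfl | rfl <;> decide)
    revert hE
    cases u <;> intro hE <;>
      first
        | exact Or.inl rfl
        | exact Or.inr (Or.inl rfl)
        | exact Or.inr (Or.inr (Or.inl rfl))
        | exact Or.inr (Or.inr (Or.inr rfl))
        | exact absurd (by decide) hE
  have heq : mk (((g a).bind encAB).map embAB) (((g b).bind encAB).map embAB)
      (((g a0).bind encCY).map embCY) (((g b0).bind encCY).map embCY)
      (((g a1).bind encCY).map embCY) (((g b1).bind encCY).map embCY) = g := by
    funext v
    cases v
    case a =>
      show ((g a).bind encAB).map embAB = g a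
      cases hga : g a with
      | none => rfl
      | some u => rcases hAB a u (Or.inl rfl) hga with rfl | rfl <;> rfl
    case b =>
      show ((g b).bind encAB).map embAB = g b
      cases hgb : g b with
      | none => rfl
      | some u => rcases hAB b u (Or.inr rfl) hgb with rfl | rfl <;> rfl
    case a0 =>
      show ((g a0).bind encCY).map embCY = g a0
      cases hga : g a0 with
      | none => rfl
      | some u => rcases hCY a0 u (Or.inl rfl) hga with rfl | rfl | rfl | rfl <;> rfl
    case b0 =>
      show ((g b0).bind encCY).map embCY = g b0
      cases hga : g b0 with
      | none => rfl
      | some u => rcases hCY b0 u (Or.inr (Or.inl rfl)) hga with rfl | rfl | rfl | rfl <;> rfl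
    case a1 =>
      show ((g a1).bind encCY).map embCY = g a1
      cases hga : g a1 with
      | none => rfl
      | some u => rcases hCY a1 u (Or.inr (Or.inr (Or.inl rfl))) hga with rfl | rfl | rfl | rfl <;> rfl
    case b1 =>
      show ((g b1).bind encCY).map embCY = g b1
      cases hga : g b1 with
      | none => rfl
      | some u => rcases hCY b1 u (Or.inr (Or.inr (Or.inr rfl))) hga with rfl | rfl | rfl | rfl <;> rfl
  have := core5 ((g a).bind encAB) ((g b).bind encAB) ((g a0).bind encCY)
    ((g b0).bind encCY) ((g a1).bind encCY) ((g b1).bind encCY)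
  rw [heq] at this
  exact this hg

set_option maxRecDepth 10000 in
lemma noinvol : ∀ g : Equiv.Perm V, g V.a = V.b → IsAut g → g * g = 1 → False := by decide

/-- The digraph `M` is homogeneous but not uniformly homogeneous: every isomorphism between
induced subdigraphs extends to an automorphism, every permutation of `{a, b}` is an
automorphism of the induced substructure on `{a, b}`, but there is no group homomorphism
from the automorphism group of the induced substructure on `{a, b}` to `Aut(M)` sending each
automorphism of `{a, b}` to an extension of it. -/
theorem M_homogeneous_not_uniformly :
    (∀ (A B : Set V) (f : ↥A ≃ ↥B),
      (∀ x y : ↥A, E x y ↔ E (f x) (f y)) →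
      ∃ g : Equiv.Perm V, IsAut g ∧ ∀ x : ↥A, g x = f x) ∧
    (∀ h : Equiv.Perm ↥({a, b} : Set V), ∀ x y : ↥({a, b} : Set V),
      E x y ↔ E (h x) (h y)) ∧
    ¬ ∃ Φ : Equiv.Perm ↥({a, b} : Set V) →* Equiv.Perm V,
        ∀ h : Equiv.Perm ↥({a, b} : Set V),
          IsAut (Φ h) ∧ ∀ x : ↥({a, b} : Set V), Φ h (x : V) = (h x : V) := by
  refine ⟨?_, ?_, ?_⟩
  · -- homogeneity
    intro A B f hf
    classical
    set g : V → Option V := fun x => if h : x ∈ A then some ((f ⟨x, h⟩ : V)) else none with hg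
    have hgood : Good g := by
      intro x y u v hx hy
      by_cases hxA : x ∈ A
      · by_cases hyA : y ∈ A
        · simp only [hg, dif_pos hxA, dif_pos hyA, Option.some.injEq] at hx hy
          subst hx; subst hy
          constructor
          · intro huv
            have : f ⟨x, hxA⟩ = f ⟨y, hyA⟩ := Subtype.coe_injective huv
            have := f.injective this
            exact congrArg Subtype.val this
          · exact hf ⟨x, hxA⟩ ⟨y, hyA⟩
        · simp [hg, dif_neg hyA] at hy
      · simp [hg, dif_neg hxA] at hx
    obtain ⟨p, hp4, hpe⟩ := core g hgood
    refine ⟨p, auts4_aut p hp4, fun x => ?_⟩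
    have hx : g ↑x = some ((f x : V)) := by
      simp only [hg, dif_pos x.2, Option.some.injEq, Subtype.coe_eta]
    exact hpe ↑x _ hx
  · -- every permutation of {a,b} is an automorphism of the induced structure
    intro h x y
    have hE : ∀ u : ↥({a, b} : Set V), ∀ v : ↥({a, b} : Set V), E (u : V) (v : V) := by
      intro u v
      have hu := u.2
      have hv := v.2
      simp only [Set.mem_insert_iff, Set.mem_singleton_iff] at hu hv
      rcases hu with h1 | h1 <;> rcases hv with h2 | h2 <;> rw [h1, h2] <;> decide
    exact iff_of_true (hE x y) (hE (h x) (h y))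
  · -- not uniformly homogeneous
    rintro ⟨Φ, hΦ⟩
    have ma : a ∈ ({a, b} : Set V) := Set.mem_insert _ _
    have mb : b ∈ ({a, b} : Set V) := Set.mem_insert_of_mem _ rfl
    set σ := Equiv.swap (⟨a, ma⟩ : ↥({a, b} : Set V)) ⟨b, mb⟩ with hσ
    have h1 : Φ σ a = b := by
      have := (hΦ σ).2 ⟨a, ma⟩
      rw [hσ, Equiv.swap_apply_left] at this
      exact this
    have hsq : Φ σ * Φ σ = 1 := by
      rw [← map_mul, Equiv.swap_mul_self, map_one]
    exact noinvol (Φ σ) h1 (hΦ σ).1 hsq
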